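/- arXiv:1912.10680 — 2 statements merged into one kernel-verified Lean document; each statement's English description precedes it below -/
import Mathlib

section
/- If x ∈ Q ∩ I_α is written as s/t in lowest terms with 0 < s < t and T_α(x) ≠ 1, then T_α(x), written in lowest terms as s'/t', has denominator t' strictly smaller than t (the denominator strictly decreases under T_α until the orbit reaches 1). -/
open Set MeasureTheory Filter Topology
open scoped Classical

/-- The Gauss map `G(x) = 1/x - ⌊1/x⌋`. -/
noncomputable def gauss (x : ℝ) : ℝ := Int.fract (1 / x)

/-- The flipped region `D_α = ⋃_{n ≥ 1} [1/(n+α), 1/n]`. -/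
def Dset (α : ℝ) : Set ℝ := ⋃ n : ℕ, Set.Icc (1 / ((n : ℝ) + 1 + α)) (1 / ((n : ℝ) + 1))

/-- The flipped α-continued fraction map `T_α`. -/
noncomputable def T (α x : ℝ) : ℝ := if x ∈ Dset α then 1 - gauss x else gauss x

/-! For `q = s/t` in lowest terms, `1/q = t/s` is again in lowest terms, and subtracting an integer
(Gauss map) or flipping `x ↦ 1 - x` does not change a denominator; so `T_α(s/t)` has
denominator `s < t`. -/

theorem Rat.den_fract_inv_lt_den {q : ℚ} (h0 : 0 < q) (h1 : q < 1) :
    (Int.fract q⁻¹).den < q.den := by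
  rw [Rat.den_intFract, Rat.den_inv_of_ne_zero h0.ne']
  have hnum_lt := Rat.num_lt_denom_iff.mpr h1
  have hnum_pos := Rat.num_pos.mpr h0
  omega

theorem gauss_ratCast (q : ℚ) : gauss q = ((Int.fract q⁻¹ : ℚ) : ℝ) := by
  rw [Rat.cast_fract, gauss, one_div, Rat.cast_inv]

theorem T_ratCast (α : ℝ) (q : ℚ) :
    T α q = ((if (q : ℝ) ∈ Dset α then 1 - Int.fract q⁻¹ else Int.fract q⁻¹ : ℚ) : ℝ) := by
  rw [T, gauss_ratCast]
  split_ifs <;> push_cast <;> rfl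

theorem stmt_3_general (α : ℝ) (q : ℚ)
    (h0 : 0 < q) (h1 : q < 1) :
    ∃ q' : ℚ, (q' : ℝ) = T α (q : ℝ) ∧ q'.den < q.den := by
  refine ⟨_, (T_ratCast α q).symm, ?_⟩
  have hlt := Rat.den_fract_inv_lt_den h0 h1
  split_ifs
  · rwa [← Int.cast_one, Rat.intCast_sub_den]
  · exact hlt

/-- the denominator of a rational in `I_α` strictly decreases
under `T_α` as long as the orbit has not reached `1`. -/
theorem stmt_3 (α : ℝ) (hα : α ∈ Set.Ioo (0:ℝ) 1) (q : ℚ)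
    (hq : (q : ℝ) ∈ Set.Icc (min α (1 - α)) 1) (h0 : 0 < q) (h1 : q < 1)
    (hne : T α (q : ℝ) ≠ 1) :
    ∃ q' : ℚ, (q' : ℝ) = T α (q : ℝ) ∧ q'.den < q.den :=
  stmt_3_general α q h0 h1
end

section
/- For α ∈ (√2-1, 1/2) and α' ∈ (1/3, (3-√5)/2), the maps T_α and T_{α'} are not c-isomorphic for any c ∈ (0,∞]: there is no invertible bi-measurable map φ defined off null sets with φ ∘ T_α = T_{α'} ∘ φ and μ_α ∘ φ^{-1} = c·μ_{α'}. -/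
/-
Every point of `(α, 1 - α)` has at most one `T α`-preimage in `[α, 1]` (this is where
`√2 - 1 < α` enters), while every point of `(α', 1]` has two `T α'`-preimages in `[α', 1]`
(this is where `α' < (3 - √5) / 2` enters). A conjugacy `φ` carries "at most one preimage" over,
so it must send `(α, 1 - α) \ N` into the `T α'`-image of the exceptional set `M`. That image is
Lebesgue-null, since `T α'` is piecewise a differentiable function of `1 / x` and `μ_α'`-null
subsets of `[α', 1]` are Lebesgue-null. Then `μ_α ∘ φ⁻¹ = c • μ_α'` forces
`μ_α (α, 1 - α) = 0`, contradicting `f_α > 0` there.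
-/

open Set MeasureTheory Filter Topology
open scoped Classical

noncomputable def fdens (α : ℝ) : ℝ → ℝ := fun x =>
  Set.indicator (Set.Icc α (α / (1 - α))) (fun y => 1 / y) x +
  Set.indicator (Set.Icc (α / (1 - α)) (1 - α)) (fun y => 1 / (1 + y)) x +
  Set.indicator (Set.Icc (1 - α) 1) (fun y => 2 / (1 - y ^ 2)) x

noncomputable def muMeas (α : ℝ) : Measure ℝ :=
  volume.withDensity fun x => ENNReal.ofReal (fdens α x)

section Conjugacy

variable {X Y : Type*}

theorem Set.BijOn.eq_of_semiconj_of_preimage_unique {f : X → X} {g : Y → Y} {φ : X → Y}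
    {A : Set X} {B : Set Y} (hφ : BijOn φ A B) (hf : MapsTo f A A)
    (hconj : ∀ x ∈ A, φ (f x) = g (φ x)) {x y : X} (hy : y ∈ A)
    (huniq : ∀ x' ∈ A, f x' = y → x' = x) {w : Y} (hw : w ∈ B) (hwy : g w = φ y) : w = φ x := by
  obtain ⟨a, ha, rfl⟩ := hφ.surjOn hw
  rw [← hconj a ha] at hwy
  rw [huniq a ha (hφ.injOn (hf ha) hy hwy)]

theorem mem_image_inter_of_ne_of_preimage_eq {f : X → Y} {S M : Set X} {z : Y} {x₁ x₂ x : X}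
    (h₁ : x₁ ∈ S) (h₂ : x₂ ∈ S) (hne : x₁ ≠ x₂) (hf₁ : f x₁ = z) (hf₂ : f x₂ = z)
    (hpre : ∀ w ∈ S \ M, f w = z → w = x) : z ∈ f '' (M ∩ S) := by
  by_contra hz
  have key : ∀ w ∈ S, f w = z → w = x := fun w hw hwz =>
    hpre w ⟨hw, fun hwM => hz ⟨w, ⟨hwM, hw⟩, hwz⟩⟩ hwz
  exact hne ((key x₁ h₁ hf₁).trans (key x₂ h₂ hf₂).symm)

end Conjugacy

lemma volume_image_eq_zero_of_differentiableAt_of_ne_zero {f : ℝ → ℝ}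
    (hf : ∀ x ≠ 0, DifferentiableAt ℝ f x) {s : Set ℝ} (hs : volume s = 0) :
    volume (f '' s) = 0 := by
  have hsplit : f '' s ⊆ f '' (s \ {0}) ∪ f '' {0} := by
    rw [← image_union, sdiff_union_self]
    exact image_mono subset_union_left
  refine measure_mono_null hsplit (measure_union_null ?_ ?_)
  · exact addHaar_image_eq_zero_of_differentiableOn_of_addHaar_eq_zero volume
      (fun x hx => (hf x hx.2).differentiableWithinAt) (measure_mono_null sdiff_subset hs)
  · rw [image_singleton]
    exact measure_singleton _

lemma T_eq_inv_sub_or (α x : ℝ) : ∃ n : ℤ, T α x = x⁻¹ - n ∨ T α x = n + 1 - x⁻¹ := by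
  refine ⟨⌊x⁻¹⌋, ?_⟩
  unfold T gauss
  rw [one_div, Int.fract]
  split_ifs
  · right; ring
  · left; rfl

lemma volume_image_T_eq_zero (α : ℝ) {s : Set ℝ} (hs : volume s = 0) :
    volume (T α '' s) = 0 := by
  have hsub : T α '' s ⊆ ⋃ n : ℤ, ((fun x => x⁻¹ - n) '' s ∪ (fun x => n + 1 - x⁻¹) '' s) := by
    rintro _ ⟨x, hx, rfl⟩
    obtain ⟨n, h | h⟩ := T_eq_inv_sub_or α x
    · exact mem_iUnion.2 ⟨n, Or.inl ⟨x, hx, h.symm⟩⟩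
    · exact mem_iUnion.2 ⟨n, Or.inr ⟨x, hx, h.symm⟩⟩
  refine measure_mono_null hsub (measure_iUnion_null fun n => measure_union_null ?_ ?_) <;>
    exact volume_image_eq_zero_of_differentiableAt_of_ne_zero
      (fun x hx => by fun_prop (disch := exact hx)) hs

lemma fdens_measurable (α : ℝ) : Measurable (fdens α) := by
  unfold fdens
  refine ((Measurable.indicator ?_ measurableSet_Icc).add
    (Measurable.indicator ?_ measurableSet_Icc)).add (Measurable.indicator ?_ measurableSet_Icc)
  · exact measurable_const.div measurable_id
  · exact measurable_const.div (measurable_const.add measurable_id)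
  · exact measurable_const.div (measurable_const.sub (measurable_id.pow_const 2))

lemma fdens_pos {α y : ℝ} (hα : 0 < α) (hy : y ∈ Ico α 1) : 0 < fdens α y := by
  obtain ⟨hy₁, hy₂⟩ := hy
  have hy₀ : 0 < y := hα.trans_le hy₁
  have hq : 0 < 2 / (1 - y ^ 2) := div_pos two_pos (by nlinarith)
  simp only [fdens, indicator, mem_Icc]
  split_ifs <;> try first | positivity | linarith
  rename_i h₁ h₂ h₃
  push Not at h₁ h₂ h₃
  linarith [h₃ (h₂ (h₁ hy₁).le).le]

lemma muMeas_absolutelyContinuous (α : ℝ) : muMeas α ≪ volume :=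
  withDensity_absolutelyContinuous _ _

lemma volume_inter_Icc_eq_zero_of_muMeas_eq_zero {α : ℝ} (hα : 0 < α) {s : Set ℝ}
    (hs : muMeas α s = 0) : volume (s ∩ Icc α 1) = 0 := by
  have hac : volume.restrict (Icc α 1) ≪ muMeas α := by
    rw [← Measure.restrict_congr_set Ico_ae_eq_Icc]
    refine (withDensity_absolutelyContinuous' (fdens_measurable α).ennreal_ofReal.aemeasurable
      ((ae_restrict_mem measurableSet_Ico).mono fun y hy => ?_)).trans ?_
    · simpa using fdens_pos hα hy
    · rw [← restrict_withDensity measurableSet_Ico]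
      exact Measure.absolutelyContinuous_of_le Measure.restrict_le_self
  rw [← Measure.restrict_apply' measurableSet_Icc]
  exact hac hs

lemma muMeas_Ioo_ne_zero {α : ℝ} (hα₀ : 0 < α) (hα : α < 1 / 2) :
    muMeas α (Ioo α (1 - α)) ≠ 0 := by
  intro h
  have h := volume_inter_Icc_eq_zero_of_muMeas_eq_zero hα₀ h
  rw [inter_eq_left.2 (Ioo_subset_Icc_self.trans (Icc_subset_Icc_right (by linarith))),
    Real.volume_Ioo, ENNReal.ofReal_eq_zero] at h
  linarith

lemma mem_Dset_iff {α x : ℝ} (hα : 0 ≤ α) (hx : 0 < x) :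
    x ∈ Dset α ↔ ∃ n : ℕ, x⁻¹ ≤ n + 1 + α ∧ (n : ℝ) + 1 ≤ x⁻¹ := by
  simp only [Dset, mem_iUnion, mem_Icc, one_div]
  refine exists_congr fun n => and_congr ?_ ?_
  · exact inv_le_comm₀ (by positivity) hx
  · exact le_inv_comm₀ hx (by positivity)

lemma gauss_inv_eq_sub {t : ℝ} (n : ℕ) (h₁ : n ≤ t) (h₂ : t < n + 1) : gauss t⁻¹ = t - n := by
  have hfloor : ⌊t⌋ = n := Int.floor_eq_iff.2 ⟨by exact_mod_cast h₁, by exact_mod_cast h₂⟩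
  rw [gauss, one_div, inv_inv, Int.fract, hfloor, Int.cast_natCast]

lemma T_inv_eq_sub {α t : ℝ} (hα : 0 ≤ α) (n : ℕ) (h₁ : n + α < t) (h₂ : t < n + 1) :
    T α t⁻¹ = t - n := by
  have ht : 0 < t := by linarith [(n.cast_nonneg : (0 : ℝ) ≤ n)]
  have hD : t⁻¹ ∉ Dset α := by
    rw [mem_Dset_iff hα (inv_pos.2 ht), inv_inv]
    rintro ⟨m, hm₁, hm₂⟩
    have hmn : m < n := by exact_mod_cast (show (m : ℝ) < n by linarith)
    have : (m : ℝ) + 1 ≤ n := by exact_mod_cast hmn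
    linarith
  rw [T, if_neg hD, gauss_inv_eq_sub n (by linarith) h₂]

lemma T_inv_eq_add_two_sub {α t : ℝ} (hα₀ : 0 ≤ α) (hα₁ : α < 1) (n : ℕ) (h₁ : n + 1 ≤ t)
    (h₂ : t ≤ n + 1 + α) : T α t⁻¹ = n + 2 - t := by
  have ht : 0 < t := by linarith [(n.cast_nonneg : (0 : ℝ) ≤ n)]
  have hD : t⁻¹ ∈ Dset α := by
    rw [mem_Dset_iff hα₀ (inv_pos.2 ht), inv_inv]
    exact ⟨n, h₂, h₁⟩
  rw [T, if_pos hD, gauss_inv_eq_sub (n + 1) (by push_cast; linarith) (by push_cast; linarith)]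
  push_cast
  ring

lemma inv_mem_Icc_iff {α t : ℝ} (hα : 0 < α) (ht : 0 < t) :
    t⁻¹ ∈ Icc α 1 ↔ 1 ≤ t ∧ t * α ≤ 1 := by
  rw [mem_Icc, le_inv_comm₀ hα ht, ← one_div, le_div_iff₀ hα, inv_le_one₀ ht, and_comm]

lemma eq_inv_one_add_of_T_eq {α x y : ℝ} (hα₀ : 0 < α) (hα : 1 < α * (2 + α))
    (hy : y ∈ Ioo α (1 - α)) (hx : x ∈ Icc α 1) (hTx : T α x = y) : x = (1 + y)⁻¹ := by
  obtain ⟨hy₁, hy₂⟩ := hy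
  have hx₀ : 0 < x := hα₀.trans_le hx.1
  rw [← inv_inv x] at hx hTx ⊢
  obtain ⟨ht₁, ht₂⟩ := (inv_mem_Icc_iff hα₀ (inv_pos.2 hx₀)).1 hx
  congr 1
  rcases le_or_gt x⁻¹ (1 + α) with h | h
  · rw [T_inv_eq_add_two_sub hα₀.le (by linarith) 0 (by push_cast; linarith)
      (by push_cast; linarith)] at hTx
    push_cast at hTx
    linarith
  rcases lt_or_ge x⁻¹ 2 with h' | h'
  · rw [T_inv_eq_sub hα₀.le 1 (by push_cast; linarith) (by push_cast; linarith)] at hTx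
    push_cast at hTx
    linarith
  rcases le_or_gt x⁻¹ (2 + α) with h'' | h''
  · rw [T_inv_eq_add_two_sub hα₀.le (by linarith) 1 (by push_cast; linarith)
      (by push_cast; linarith)] at hTx
    push_cast at hTx
    linarith
  · nlinarith

lemma exists_ne_T_eq {α z : ℝ} (hα₀ : 0 < α) (hα : α * (3 - α) < 1) (hz : z ∈ Ioc α 1) :
    ∃ x₁ ∈ Icc α 1, ∃ x₂ ∈ Icc α 1, x₁ ≠ x₂ ∧ T α x₁ = z ∧ T α x₂ = z := by
  obtain ⟨hz₁, hz₂⟩ := hz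
  have hα₁ : α < 1 / 2 := by nlinarith
  suffices ∃ t₁ t₂ : ℝ, t₁ < t₂ ∧ 1 ≤ t₁ ∧ t₂ * α ≤ 1 ∧ T α t₁⁻¹ = z ∧ T α t₂⁻¹ = z by
    obtain ⟨t₁, t₂, hlt, ht₁, ht₂, h₁, h₂⟩ := this
    refine ⟨t₁⁻¹, (inv_mem_Icc_iff hα₀ (by linarith)).2 ⟨ht₁, by nlinarith⟩,
      t₂⁻¹, (inv_mem_Icc_iff hα₀ (by linarith)).2 ⟨by linarith, ht₂⟩,
      fun h => hlt.ne (inv_injective h), h₁, h₂⟩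
  rcases lt_or_ge z (1 - α) with h | h
  · refine ⟨1 + z, 2 + z, by linarith, by linarith, by nlinarith, ?_, ?_⟩
    · rw [T_inv_eq_sub hα₀.le 1 (by push_cast; linarith) (by push_cast; linarith)]
      push_cast
      ring
    · rw [T_inv_eq_sub hα₀.le 2 (by push_cast; linarith) (by push_cast; linarith)]
      push_cast
      ring
  · refine ⟨2 - z, 3 - z, by linarith, by linarith, by nlinarith, ?_, ?_⟩
    · rw [T_inv_eq_add_two_sub hα₀.le (by linarith) 0 (by push_cast; linarith)
        (by push_cast; linarith)]
      push_cast
      ring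
    · rw [T_inv_eq_add_two_sub hα₀.le (by linarith) 1 (by push_cast; linarith)
        (by push_cast; linarith)]
      push_cast
      ring

lemma one_lt_mul_two_add_of_sqrt_two_sub_one_lt {α : ℝ} (h : √2 - 1 < α) : 1 < α * (2 + α) := by
  nlinarith [Real.sq_sqrt (show (0 : ℝ) ≤ 2 by norm_num), Real.one_lt_sqrt_two]

lemma mul_three_sub_lt_one_of_lt {α : ℝ} (h : α < (3 - √5) / 2) : α * (3 - α) < 1 := by
  have h5 := Real.sq_sqrt (show (0 : ℝ) ≤ 5 by norm_num)
  nlinarith [mul_pos (show 0 < (3 - √5) / 2 - α by linarith)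
    (show 0 < (3 + √5) / 2 - α by linarith [Real.sqrt_nonneg 5])]

/-- for `α ∈ (√2-1, 1/2)` and `α' ∈ (1/3, (3-√5)/2)`, the maps
`T_α` and `T_{α'}` are not `c`-isomorphic for any `c ∈ (0,∞]`. -/
theorem stmt_19 (α α' : ℝ) (hα : α ∈ Set.Ioo (Real.sqrt 2 - 1) (1/2 : ℝ))
    (hα' : α' ∈ Set.Ioo (1/3 : ℝ) ((3 - Real.sqrt 5) / 2)) :
    ¬ ∃ (c : ENNReal) (N M : Set ℝ) (φ ψ : ℝ → ℝ),
      c ≠ 0 ∧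
      muMeas α N = 0 ∧ muMeas α' M = 0 ∧
      Set.MapsTo (T α) (Set.Icc α 1 \ N) (Set.Icc α 1 \ N) ∧
      Set.MapsTo (T α') (Set.Icc α' 1 \ M) (Set.Icc α' 1 \ M) ∧
      Measurable φ ∧ Measurable ψ ∧
      Set.BijOn φ (Set.Icc α 1 \ N) (Set.Icc α' 1 \ M) ∧
      Set.InvOn ψ φ (Set.Icc α 1 \ N) (Set.Icc α' 1 \ M) ∧
      (∀ x ∈ Set.Icc α 1 \ N, φ (T α x) = T α' (φ x)) ∧
      (∀ S : Set ℝ, MeasurableSet S → muMeas α (φ ⁻¹' S) = c * muMeas α' S) := by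
  rintro ⟨c, N, M, φ, -, -, hN, hM, hTN, -, -, -, hφ, -, hconj, hμ⟩
  have hα₀ : 0 < α := by linarith [hα.1, Real.one_lt_sqrt_two]
  have hα'₀ : 0 < α' := by linarith [hα'.1]
  set K := toMeasurable (muMeas α') (T α' '' (M ∩ Icc α' 1) ∪ {α'})
  have hK : muMeas α' K = 0 := by
    rw [measure_toMeasurable]
    exact muMeas_absolutelyContinuous α' (measure_union_null (volume_image_T_eq_zero α'
      (volume_inter_Icc_eq_zero_of_muMeas_eq_zero hα'₀ hM)) (measure_singleton α'))
  have hsub : Ioo α (1 - α) \ N ⊆ φ ⁻¹' K := by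
    rintro y ⟨hy, hyN⟩
    have hyA : y ∈ Icc α 1 \ N :=
      ⟨Ioo_subset_Icc_self.trans (Icc_subset_Icc_right (by linarith [hα.2])) hy, hyN⟩
    have hφy := (hφ.mapsTo hyA).1
    refine subset_toMeasurable _ _ ?_
    rcases eq_or_lt_of_le hφy.1 with hz | hz
    · exact Or.inr hz.symm
    obtain ⟨x₁, hx₁, x₂, hx₂, hne, h₁, h₂⟩ :=
      exists_ne_T_eq hα'₀ (mul_three_sub_lt_one_of_lt hα'.2) ⟨hz, hφy.2⟩
    refine Or.inl (mem_image_inter_of_ne_of_preimage_eq (x := φ (1 + y)⁻¹) hx₁ hx₂ hne h₁ h₂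
      fun w hw hwy => ?_)
    exact hφ.eq_of_semiconj_of_preimage_unique hTN hconj hyA
      (fun x hx => eq_inv_one_add_of_T_eq hα₀
        (one_lt_mul_two_add_of_sqrt_two_sub_one_lt hα.1) hy hx.1) hw hwy
  refine muMeas_Ioo_ne_zero hα₀ hα.2 ?_
  rw [← measure_sdiff_null hN]
  exact measure_mono_null hsub (by rw [hμ K (measurableSet_toMeasurable _ _), hK, mul_zero])
end
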